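/- Let 0 < ε < 1/8, 0 < σ_min ≤ σ_max, and κ = σ_max/σ_min. Let M ∈ ℝ^{n×d} have least singular value at least σ_min and largest singular value at most σ_max. Let B = { x ∈ [−1,1]^d : every coordinate of x is an integer multiple of ε/(100·κ·d) }. Suppose Y ∈ ℝ^{d×d} is symmetric positive semidefinite and satisfies |xᵀ Y x − ‖M x‖₂²| ≤ (ε/2)·‖M x‖₂² for all x ∈ B. Then the largest eigenvalue of Y is at most 4·σ_max². -/

import Mathlib

/-!
On the grid, `xᵀYx ≤ (1 + ε/2)‖Mx‖² ≤ (1 + ε/2)σ_max²‖x‖²`; testing this on the grid points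
`δ eᵢ` bounds every diagonal entry of `Y`, hence `tr Y ≤ d(1 + ε/2)σ_max²`. A vector `u` with
`‖u‖² = 1/4` is rounded coordinatewise to a grid point `x`, with error `e` of size
`‖e‖² ≤ dδ²/4`. Since `Y` is PSD, `uᵀYu ≤ (3/2)xᵀYx + 3eᵀYe`, and `eᵀYe ≤ tr Y ‖e‖²` is
negligible because `dδ ≤ ε/100`; this gives `uᵀYu ≤ 3(1 + ε/2)σ_max²‖u‖² ≤ 4σ_max²‖u‖²`, and
homogeneity extends the bound to all vectors.
-/

open Matrix

def cubeGrid (ι : Type*) (δ : ℝ) : Set (ι → ℝ) :=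
  {x | ∀ i, |x i| ≤ 1 ∧ ∃ k : ℤ, x i = k * δ}

lemma abs_sub_round_div_mul_le (u : ℝ) {δ : ℝ} (hδ : 0 < δ) :
    |u - round (u / δ) * δ| ≤ δ / 2 := by
  calc |u - round (u / δ) * δ| = |u / δ - round (u / δ)| * δ := by
        rw [← abs_of_pos hδ, ← abs_mul, abs_of_pos hδ, sub_mul, div_mul_cancel₀ _ hδ.ne']
    _ ≤ 1 / 2 * δ := mul_le_mul_of_nonneg_right (abs_sub_round _) hδ.le
    _ = δ / 2 := one_div_mul_eq_div 2 δ

namespace cubeGrid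

variable {ι : Type*} {δ : ℝ}

lemma single_mem [DecidableEq ι] (hδ : 0 < δ) (hδ1 : δ ≤ 1) (i : ι) :
    Pi.single i δ ∈ cubeGrid ι δ := by
  intro j
  rcases eq_or_ne j i with rfl | hji
  · exact ⟨by simpa [abs_of_pos hδ] using hδ1, 1, by simp⟩
  · exact ⟨by simp [hji], 0, by simp [hji]⟩

lemma round_mem (hδ : 0 < δ) (hδ1 : δ ≤ 1) {u : ι → ℝ} (hu : ∀ i, |u i| ≤ 1 / 2) :
    (fun i => round (u i / δ) * δ) ∈ cubeGrid ι δ := by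
  refine fun i => ⟨?_, round (u i / δ), rfl⟩
  have := abs_sub_round_div_mul_le (u i) hδ
  have := abs_sub_abs_le_abs_sub (round (u i / δ) * δ) (u i)
  rw [abs_sub_comm] at this
  linarith [hu i]

end cubeGrid

namespace Matrix

variable {ι : Type*} [Fintype ι]

lemma dotProduct_mulVec_transpose_mul_self {κ : Type*} [Fintype κ] (M : Matrix κ ι ℝ)
    (x : ι → ℝ) : x ⬝ᵥ ((Mᵀ * M) *ᵥ x) = (M *ᵥ x) ⬝ᵥ (M *ᵥ x) := by
  rw [← mulVec_mulVec, dotProduct_mulVec, vecMul_transpose]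

lemma single_dotProduct_mulVec_single [DecidableEq ι] (Y : Matrix ι ι ℝ) (i : ι) (c : ℝ) :
    Pi.single i c ⬝ᵥ (Y *ᵥ Pi.single i c) = c ^ 2 * Y i i := by
  simp only [mulVec_single, single_dotProduct, Pi.smul_apply, col_apply,
    MulOpposite.smul_eq_mul_unop, MulOpposite.unop_op]
  ring

lemma sq_le_dotProduct_self (u : ι → ℝ) (i : ι) : u i ^ 2 ≤ u ⬝ᵥ u := by
  rw [sq]
  exact Finset.single_le_sum (f := fun j => u j * u j) (fun j _ => mul_self_nonneg (u j))
    (Finset.mem_univ i)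

lemma dotProduct_self_nonneg (u : ι → ℝ) : 0 ≤ u ⬝ᵥ u :=
  Finset.sum_nonneg fun i _ => mul_self_nonneg (u i)

namespace PosSemidef

variable {Y : Matrix ι ι ℝ}

theorem dotProduct_mulVec_add_le (hY : Y.PosSemidef) {t : ℝ} (ht : 0 < t) (x e : ι → ℝ) :
    (x + e) ⬝ᵥ (Y *ᵥ (x + e)) ≤
      (1 + t) * (x ⬝ᵥ (Y *ᵥ x)) + (1 + t⁻¹) * (e ⬝ᵥ (Y *ᵥ e)) := by
  have hnonneg := hY.dotProduct_mulVec_nonneg (t • x - e)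
  simp only [star_trivial, mulVec_sub, mulVec_smul, dotProduct_sub, sub_dotProduct,
    dotProduct_smul, smul_dotProduct, smul_eq_mul] at hnonneg
  simp only [mulVec_add, dotProduct_add, add_dotProduct]
  have hcross : x ⬝ᵥ (Y *ᵥ e) + e ⬝ᵥ (Y *ᵥ x) ≤ t * (x ⬝ᵥ (Y *ᵥ x)) + t⁻¹ * (e ⬝ᵥ (Y *ᵥ e)) := by
    rw [← mul_le_mul_iff_of_pos_left ht]
    field_simp
    nlinarith
  linarith

theorem dotProduct_mulVec_le_trace_mul (hY : Y.PosSemidef) (x : ι → ℝ) :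
    x ⬝ᵥ (Y *ᵥ x) ≤ Y.trace * (x ⬝ᵥ x) := by
  classical
  obtain ⟨B, rfl⟩ : ∃ B : Matrix ι ι ℝ, Y = Bᴴ * B := by
    open MatrixOrder in exact CStarAlgebra.nonneg_iff_eq_star_mul_self.mp hY.nonneg
  have hrow : ∀ k, (B *ᵥ x) k ^ 2 ≤ (∑ i, B k i ^ 2) * (x ⬝ᵥ x) := fun k => by
    simpa only [mulVec, dotProduct, sq] using Finset.sum_mul_sq_le_sq_mul_sq Finset.univ (B k) x
  have htrace : (Bᴴ * B).trace = ∑ k, ∑ i, B k i ^ 2 := by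
    rw [trace_mul_comm, trace, Finset.sum_congr rfl]
    intro k _
    simp [mul_apply, sq]
  calc x ⬝ᵥ ((Bᴴ * B) *ᵥ x) = ∑ k, (B *ᵥ x) k ^ 2 := by
        rw [conjTranspose_eq_transpose_of_trivial, dotProduct_mulVec_transpose_mul_self]
        simp only [dotProduct, sq]
    _ ≤ ∑ k, (∑ i, B k i ^ 2) * (x ⬝ᵥ x) := Finset.sum_le_sum fun k _ => hrow k
    _ = (Bᴴ * B).trace * (x ⬝ᵥ x) := by rw [htrace, Finset.sum_mul]

end PosSemidef

theorem posSemidef_smul_one_sub_iff [DecidableEq ι] {A : Matrix ι ι ℝ} (hA : A.IsHermitian)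
    {c : ℝ} : (c • 1 - A).PosSemidef ↔ ∀ v, v ⬝ᵥ (A *ᵥ v) ≤ c * (v ⬝ᵥ v) := by
  have hquad : ∀ v, v ⬝ᵥ ((c • 1 - A) *ᵥ v) = c * (v ⬝ᵥ v) - v ⬝ᵥ (A *ᵥ v) := fun v => by
    simp only [sub_mulVec, smul_mulVec, one_mulVec, dotProduct_sub, dotProduct_smul, smul_eq_mul]
  have hherm : (c • 1 - A).IsHermitian :=
    (isHermitian_one.smul (IsSelfAdjoint.all c)).sub hA
  refine ⟨fun h v => ?_, fun h => .of_dotProduct_mulVec_nonneg hherm fun v => ?_⟩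
  · simpa [hquad] using h.dotProduct_mulVec_nonneg v
  · simpa [hquad] using h v

theorem dotProduct_mulVec_le_of_dotProduct_self_eq {Y : Matrix ι ι ℝ} {c r : ℝ} (hr : 0 < r)
    (h : ∀ u, u ⬝ᵥ u = r → u ⬝ᵥ (Y *ᵥ u) ≤ c * r) (v : ι → ℝ) :
    v ⬝ᵥ (Y *ᵥ v) ≤ c * (v ⬝ᵥ v) := by
  rcases (dotProduct_self_nonneg v).eq_or_lt with hv | hv
  · rw [← hv, dotProduct_self_eq_zero.1 hv.symm]
    simp
  set s := Real.sqrt (r / (v ⬝ᵥ v))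
  have hs : s ^ 2 * (v ⬝ᵥ v) = r := by
    rw [Real.sq_sqrt (by positivity)]
    field_simp
  have hsu := h (s • v) (by simpa [smul_dotProduct, dotProduct_smul, ← mul_assoc, ← sq] using hs)
  simp only [mulVec_smul, smul_dotProduct, dotProduct_smul, smul_eq_mul, ← mul_assoc, ← sq,
    ← hs] at hsu
  have : 0 < s ^ 2 := by positivity
  nlinarith

section cubeGrid

variable {Y : Matrix ι ι ℝ} {δ C : ℝ}

lemma diag_le_of_cubeGrid (hδ : 0 < δ) (hδ1 : δ ≤ 1)
    (hgrid : ∀ x ∈ cubeGrid ι δ, x ⬝ᵥ (Y *ᵥ x) ≤ C * (x ⬝ᵥ x)) (i : ι) : Y i i ≤ C := by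
  classical
  have h := hgrid _ (cubeGrid.single_mem hδ hδ1 i)
  rw [single_dotProduct_mulVec_single, single_dotProduct, Pi.single_eq_same] at h
  exact le_of_mul_le_mul_left (by linarith) (by positivity : 0 < δ ^ 2)

lemma trace_le_of_cubeGrid (hδ : 0 < δ) (hδ1 : δ ≤ 1)
    (hgrid : ∀ x ∈ cubeGrid ι δ, x ⬝ᵥ (Y *ᵥ x) ≤ C * (x ⬝ᵥ x)) :
    Y.trace ≤ Fintype.card ι * C := by
  calc Y.trace ≤ ∑ _i : ι, C := Finset.sum_le_sum fun i _ => diag_le_of_cubeGrid hδ hδ1 hgrid i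
    _ = Fintype.card ι * C := by simp

theorem PosSemidef.dotProduct_mulVec_le_of_cubeGrid (hY : Y.PosSemidef) (hC : 0 ≤ C) (hδ : 0 < δ)
    (hδι : Fintype.card ι * δ ≤ 1 / 4)
    (hgrid : ∀ x ∈ cubeGrid ι δ, x ⬝ᵥ (Y *ᵥ x) ≤ C * (x ⬝ᵥ x)) (v : ι → ℝ) :
    v ⬝ᵥ (Y *ᵥ v) ≤ 3 * C * (v ⬝ᵥ v) := by
  refine dotProduct_mulVec_le_of_dotProduct_self_eq (r := 1 / 4) (by norm_num) (fun u hu => ?_) v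
  have : Nonempty ι := not_isEmpty_iff.1 fun _ => by simp at hu
  set d : ℝ := (Fintype.card ι : ℝ)
  have hd : 1 ≤ d := Nat.one_le_cast.mpr Fintype.card_pos
  have hδ1 : δ ≤ 1 / 4 := le_trans (le_mul_of_one_le_left hδ.le hd) hδι
  set x : ι → ℝ := fun i => round (u i / δ) * δ
  set e := u - x
  have hx : x ∈ cubeGrid ι δ := cubeGrid.round_mem hδ (by linarith) fun i =>
    abs_le_of_sq_le_sq (by linarith [sq_le_dotProduct_self u i]) (by norm_num)
  have he : e ⬝ᵥ e ≤ d * (δ / 2) ^ 2 := by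
    calc e ⬝ᵥ e ≤ ∑ _i : ι, (δ / 2) ^ 2 := Finset.sum_le_sum fun i _ => by
          rw [← sq, ← sq_abs]
          exact pow_le_pow_left₀ (abs_nonneg _) (abs_sub_round_div_mul_le (u i) hδ) 2
      _ = d * (δ / 2) ^ 2 := by simp [d]
  have hxx : x ⬝ᵥ x ≤ 3 / 2 * (u ⬝ᵥ u) + 3 * (e ⬝ᵥ e) := by
    classical
    have := PosSemidef.one.dotProduct_mulVec_add_le (t := 1 / 2) (by norm_num) u (-e)
    simp only [one_mulVec, neg_dotProduct, dotProduct_neg, neg_neg] at this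
    norm_num [e] at this ⊢
    linarith
  have hqx := hgrid x hx
  have hqe : e ⬝ᵥ (Y *ᵥ e) ≤ d * C * (e ⬝ᵥ e) :=
    (hY.dotProduct_mulVec_le_trace_mul e).trans
      (mul_le_mul_of_nonneg_right (trace_le_of_cubeGrid hδ (by linarith) hgrid)
        (dotProduct_self_nonneg e))
  have hqu : u ⬝ᵥ (Y *ᵥ u) ≤ 3 / 2 * (x ⬝ᵥ (Y *ᵥ x)) + 3 * (e ⬝ᵥ (Y *ᵥ e)) := by
    have := hY.dotProduct_mulVec_add_le (t := 1 / 2) (by norm_num) x e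
    norm_num [e] at this ⊢
    linarith
  have hdE : d * (e ⬝ᵥ e) ≤ 1 / 64 := by
    calc d * (e ⬝ᵥ e) ≤ d * (d * (δ / 2) ^ 2) := by gcongr
      _ = (d * δ) ^ 2 / 4 := by ring
      _ ≤ (1 / 4) ^ 2 / 4 := by gcongr
      _ = 1 / 64 := by norm_num
  have hE : e ⬝ᵥ e ≤ 1 / 64 := (le_mul_of_one_le_left (dotProduct_self_nonneg e) hd).trans hdE
  rw [hu] at hxx
  nlinarith [mul_le_mul_of_nonneg_left hxx hC, mul_le_mul_of_nonneg_left hE hC,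
    mul_le_mul_of_nonneg_left hdE hC]

end cubeGrid

end Matrix

theorem grid_agreement_spectral_bound_general {n d : ℕ}
    (ε σmin σmax : ℝ) (hε0 : 0 < ε) (hε : ε < 1 / 8)
    (hσ0 : 0 < σmin) (hσ : σmin ≤ σmax)
    (M : Matrix (Fin n) (Fin d) ℝ)
    (hMhigh : (σmax ^ 2 • (1 : Matrix (Fin d) (Fin d) ℝ) - Mᵀ * M).PosSemidef)
    (Y : Matrix (Fin d) (Fin d) ℝ) (hY : Y.PosSemidef)
    (hYgrid : ∀ x : Fin d → ℝ,
      (∀ i, |x i| ≤ 1 ∧ ∃ k : ℤ, x i = k * (ε / (100 * (σmax / σmin) * d))) →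
      |x ⬝ᵥ (Y *ᵥ x) - (M *ᵥ x) ⬝ᵥ (M *ᵥ x)| ≤ (ε / 2) * ((M *ᵥ x) ⬝ᵥ (M *ᵥ x))) :
    ((4 * σmax ^ 2) • (1 : Matrix (Fin d) (Fin d) ℝ) - Y).PosSemidef := by
  set δ := ε / (100 * (σmax / σmin) * d)
  have hM x : (M *ᵥ x) ⬝ᵥ (M *ᵥ x) ≤ σmax ^ 2 * (x ⬝ᵥ x) := by
    rw [← dotProduct_mulVec_transpose_mul_self]
    exact (posSemidef_smul_one_sub_iff 
      (by simpa using isHermitian_conjTranspose_mul_self M)).1 hMhigh x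
  have hgrid : ∀ x ∈ cubeGrid (Fin d) δ, x ⬝ᵥ (Y *ᵥ x) ≤ (1 + ε / 2) * σmax ^ 2 * (x ⬝ᵥ x) :=
    fun x hx => by
      nlinarith [(abs_le.1 (hYgrid x hx)).2, hM x, dotProduct_self_nonneg (M *ᵥ x)]
  rw [posSemidef_smul_one_sub_iff hY.isHermitian]
  intro v
  rcases Nat.eq_zero_or_pos d with rfl | hd
  · simp [dotProduct]
  have hκ : 1 ≤ σmax / σmin := (one_le_div hσ0).2 hσ
  have hδ : 0 < δ := by positivity
  have hdδ : (Fintype.card (Fin d) : ℝ) * δ ≤ 1 / 4 := by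
    rw [Fintype.card_fin, mul_div_assoc', div_le_iff₀ (by positivity)]
    nlinarith
  calc v ⬝ᵥ (Y *ᵥ v) ≤ 3 * ((1 + ε / 2) * σmax ^ 2) * (v ⬝ᵥ v) :=
        hY.dotProduct_mulVec_le_of_cubeGrid (by positivity) hδ hdδ hgrid v
    _ ≤ 4 * σmax ^ 2 * (v ⬝ᵥ v) := by
        gcongr ?_ * _
        · exact dotProduct_self_nonneg v
        · nlinarith [sq_nonneg σmax]

/-- Claim C.1, used in Step 2 of the proof of Lemma 5.10. If the
quadratic form of a symmetric PSD matrix `Y` agrees with `‖Mx‖₂²` up to a factor `ε/2` on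
the grid `B` of points of `[−1,1]^d` whose coordinates are integer multiples of
`ε/(100κd)` (κ = σ_max/σ_min), then the largest eigenvalue of `Y` is at most `4σ_max²`,
i.e. `Y ⪯ 4σ_max²·I`. -/
theorem grid_agreement_spectral_bound {n d : ℕ}
    (ε σmin σmax : ℝ) (hε0 : 0 < ε) (hε : ε < 1 / 8)
    (hσ0 : 0 < σmin) (hσ : σmin ≤ σmax)
    (M : Matrix (Fin n) (Fin d) ℝ)
    (hMlow : (Mᵀ * M - σmin ^ 2 • (1 : Matrix (Fin d) (Fin d) ℝ)).PosSemidef)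
    (hMhigh : (σmax ^ 2 • (1 : Matrix (Fin d) (Fin d) ℝ) - Mᵀ * M).PosSemidef)
    (Y : Matrix (Fin d) (Fin d) ℝ) (hY : Y.PosSemidef)
    (hYgrid : ∀ x : Fin d → ℝ,
      (∀ i, |x i| ≤ 1 ∧ ∃ k : ℤ, x i = k * (ε / (100 * (σmax / σmin) * d))) →
      |x ⬝ᵥ (Y *ᵥ x) - (M *ᵥ x) ⬝ᵥ (M *ᵥ x)| ≤ (ε / 2) * ((M *ᵥ x) ⬝ᵥ (M *ᵥ x))) :
    ((4 * σmax ^ 2) • (1 : Matrix (Fin d) (Fin d) ℝ) - Y).PosSemidef :=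
  grid_agreement_spectral_bound_general ε σmin σmax hε0 hε hσ0 hσ M hMhigh Y hY hYgrid
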